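/- Let (ψ,ψ₁) be a finite-energy pair on (0,∞) with ψ of class C¹, lim_{r→0} ψ(r) = 0 and lim_{r→∞} ψ(r) = π. Then the energy factors as E(ψ,ψ₁) = ∫₀^∞ ψ₁² r dr + ∫₀^∞ (ψ'(r) − sin(ψ(r))/r)² r dr + 2∫₀^π sin ρ dρ, and consequently E(ψ,ψ₁) ≥ ∫₀^∞ ψ₁² r dr + 4 = ∫₀^∞ ψ₁² r dr + E(Q). -/

import Mathlib

/-!
The integrand splits as `ψ₁² r + (ψ' − sin ψ / r)² r + 2 sin ψ · ψ'`. The last term is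
`(Φ ∘ ψ)'` for a primitive `Φ` of `2 sin`, so its integral over `(0, ∞)` only depends on the
limits of `ψ` at `0` and `∞`, and equals `2 ∫₀^π sin ρ dρ = 4`. The middle term is nonnegative.
-/

open MeasureTheory Filter Set

noncomputable section

/-- The energy `E(ψ₀,ψ₁) = ∫₀^∞ (ψ₁² + ψ₀'² + sin²(ψ₀)/r²) r dr`. -/
def energy (f₀ f₁ : ℝ → ℝ) : ℝ :=
  ∫ r in Set.Ioi (0 : ℝ), (f₁ r ^ 2 + deriv f₀ r ^ 2 + Real.sin (f₀ r) ^ 2 / r ^ 2) * r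

open Topology

theorem integral_Ioi_of_hasDerivAt_of_tendsto_nhdsGT {E : Type*} [NormedAddCommGroup E]
    [NormedSpace ℝ E] [CompleteSpace E] {f f' : ℝ → E} {a : ℝ} {m₀ m : E}
    (hderiv : ∀ x ∈ Ioi a, HasDerivAt f (f' x) x) (f'int : IntegrableOn f' (Ioi a))
    (ha : Tendsto f (𝓝[>] a) (𝓝 m₀)) (hf : Tendsto f atTop (𝓝 m)) :
    ∫ x in Ioi a, f' x = m - m₀ := by
  classical
  set F := Function.update f a m₀
  have hF : ∀ x ≠ a, F x = f x := fun x hx => Function.update_of_ne hx m₀ f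
  have hFcont : ContinuousWithinAt F (Ici a) a := by
    rwa [continuousWithinAt_update_same, ← Ioi_insert, insert_sdiff_self_of_notMem self_notMem_Ioi]
  have hFderiv : ∀ x ∈ Ioi a, HasDerivAt F (f' x) x := fun x hx =>
    (hderiv x hx).congr_of_eventuallyEq <| by
      filter_upwards [eventually_ne_nhds (ne_of_gt hx)] with y hy using hF y hy
  have hFtop : Tendsto F atTop (𝓝 m) :=
    hf.congr' <| by filter_upwards [eventually_ne_atTop a] with x hx using (hF x hx).symm
  simpa [F] using integral_Ioi_of_hasDerivAt_of_tendsto hFcont hFderiv f'int hFtop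

theorem integral_Ioi_comp_mul_deriv_of_tendsto {φ ψ ψ' : ℝ → ℝ} {a l L : ℝ}
    (hφ : Continuous φ) (hψ : ∀ x ∈ Ioi a, HasDerivAt ψ (ψ' x) x)
    (hint : IntegrableOn (fun x => φ (ψ x) * ψ' x) (Ioi a))
    (ha : Tendsto ψ (𝓝[>] a) (𝓝 l)) (htop : Tendsto ψ atTop (𝓝 L)) :
    ∫ x in Ioi a, φ (ψ x) * ψ' x = ∫ ρ in l..L, φ ρ := by
  set Φ : ℝ → ℝ := fun u => ∫ ρ in l..u, φ ρ
  have hΦ : Continuous Φ :=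
    intervalIntegral.continuous_primitive (fun _ _ => hφ.intervalIntegrable _ _) l
  have hderiv : ∀ x ∈ Ioi a, HasDerivAt (Φ ∘ ψ) (φ (ψ x) * ψ' x) x := fun x hx =>
    (hφ.integral_hasStrictDerivAt l (ψ x)).hasDerivAt.comp x (hψ x hx)
  have := integral_Ioi_of_hasDerivAt_of_tendsto_nhdsGT hderiv hint
    ((hΦ.tendsto l).comp ha) ((hΦ.tendsto L).comp htop)
  simpa [Φ] using this

theorem sq_add_sq_div_sq_mul_eq (a s : ℝ) {r : ℝ} (hr : r ≠ 0) :
    (a ^ 2 + s ^ 2 / r ^ 2) * r = (a - s / r) ^ 2 * r + 2 * s * a := by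
  field_simp
  ring

theorem abs_two_mul_mul_le (a s : ℝ) {r : ℝ} (hr : 0 < r) :
    |2 * s * a| ≤ a ^ 2 * r + s ^ 2 / r ^ 2 * r := by
  have hplus := sq_add_sq_div_sq_mul_eq a s hr.ne'
  have hminus := sq_add_sq_div_sq_mul_eq a (-s) hr.ne'
  have hsq_plus : 0 ≤ (a - s / r) ^ 2 * r := by positivity
  have hsq_minus : 0 ≤ (a - -s / r) ^ 2 * r := by positivity
  rw [neg_sq] at hminus
  rw [abs_le]
  constructor <;> linarith

section Energy

variable {f₀ f₁ : ℝ → ℝ} (hf₀ : AEStronglyMeasurable f₀ (volume.restrict (Ioi 0)))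
  (h2 : IntegrableOn (fun r => deriv f₀ r ^ 2 * r) (Ioi 0))
  (h3 : IntegrableOn (fun r => Real.sin (f₀ r) ^ 2 / r ^ 2 * r) (Ioi 0))
include hf₀ h2 h3

theorem integrableOn_two_mul_sin_mul_deriv :
    IntegrableOn (fun r => 2 * Real.sin (f₀ r) * deriv f₀ r) (Ioi 0) := by
  have hmeas : AEStronglyMeasurable (fun r => 2 * Real.sin (f₀ r) * deriv f₀ r)
      (volume.restrict (Ioi 0)) :=
    ((Real.continuous_sin.comp_aestronglyMeasurable hf₀).const_mul 2).mul
      (measurable_deriv f₀).aestronglyMeasurable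
  refine (h2.add h3).mono' hmeas ?_
  filter_upwards [ae_restrict_mem measurableSet_Ioi] with r hr
  exact abs_two_mul_mul_le _ _ hr

theorem energy_eq_integral_add_integral_add_integral
    (h1 : IntegrableOn (fun r => f₁ r ^ 2 * r) (Ioi 0)) :
    energy f₀ f₁ = (∫ r in Ioi (0:ℝ), f₁ r ^ 2 * r)
      + (∫ r in Ioi (0:ℝ), (deriv f₀ r - Real.sin (f₀ r) / r) ^ 2 * r)
      + ∫ r in Ioi (0:ℝ), 2 * Real.sin (f₀ r) * deriv f₀ r := by
  have hcross := integrableOn_two_mul_sin_mul_deriv hf₀ h2 h3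
  have hsplit : ∀ r ∈ Ioi (0:ℝ),
      (f₁ r ^ 2 + deriv f₀ r ^ 2 + Real.sin (f₀ r) ^ 2 / r ^ 2) * r
        = f₁ r ^ 2 * r + (deriv f₀ r - Real.sin (f₀ r) / r) ^ 2 * r
          + 2 * Real.sin (f₀ r) * deriv f₀ r := fun r hr => by
    rw [add_assoc, add_mul, sq_add_sq_div_sq_mul_eq _ _ (ne_of_gt hr)]
    ring
  have hB : IntegrableOn (fun r => (deriv f₀ r - Real.sin (f₀ r) / r) ^ 2 * r) (Ioi 0) := by
    refine ((h2.add h3).sub hcross).congr_fun (fun r hr => ?_) measurableSet_Ioi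
    have := sq_add_sq_div_sq_mul_eq (deriv f₀ r) (Real.sin (f₀ r)) (ne_of_gt hr)
    simp only [Pi.add_apply, Pi.sub_apply]
    linarith
  have h1B : IntegrableOn
      (fun r => f₁ r ^ 2 * r + (deriv f₀ r - Real.sin (f₀ r) / r) ^ 2 * r) (Ioi 0) :=
    h1.add hB
  rw [energy, setIntegral_congr_fun measurableSet_Ioi hsplit, integral_add h1B hcross,
    integral_add h1 hB]

end Energy

/-- Bogomol'nyi factorization of the energy of a degree one pair:
`E(ψ,ψ₁) = ∫ψ₁² r dr + ∫(ψ' − sin ψ/r)² r dr + 2∫₀^π sin ρ dρ`, whence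
`E(ψ,ψ₁) ≥ ∫ψ₁² r dr + 4 = ∫ψ₁² r dr + E(Q)`. -/
theorem energy_factorization_H1
    (ψ ψ₁ : ℝ → ℝ)
    (hψ : ContDiffOn ℝ 1 ψ (Set.Ioi 0))
    (h1 : IntegrableOn (fun r => ψ₁ r ^ 2 * r) (Set.Ioi 0))
    (h2 : IntegrableOn (fun r => deriv ψ r ^ 2 * r) (Set.Ioi 0))
    (h3 : IntegrableOn (fun r => Real.sin (ψ r) ^ 2 / r ^ 2 * r) (Set.Ioi 0))
    (hlim0 : Tendsto ψ (nhdsWithin 0 (Set.Ioi 0)) (nhds 0))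
    (hlimpi : Tendsto ψ atTop (nhds Real.pi)) :
    energy ψ ψ₁ = (∫ r in Set.Ioi (0:ℝ), ψ₁ r ^ 2 * r)
        + (∫ r in Set.Ioi (0:ℝ), (deriv ψ r - Real.sin (ψ r) / r) ^ 2 * r)
        + 2 * ∫ ρ in (0:ℝ)..Real.pi, Real.sin ρ ∧
      (∫ r in Set.Ioi (0:ℝ), ψ₁ r ^ 2 * r) + 4 ≤ energy ψ ψ₁ := by
  have hderiv : ∀ x ∈ Ioi (0:ℝ), HasDerivAt ψ (deriv ψ x) x := fun x hx =>
    ((hψ.differentiableOn one_ne_zero x hx).differentiableAt (isOpen_Ioi.mem_nhds hx)).hasDerivAt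
  have hmeas : AEStronglyMeasurable ψ (volume.restrict (Ioi 0)) :=
    hψ.continuousOn.aestronglyMeasurable measurableSet_Ioi
  have hcross : ∫ r in Ioi (0:ℝ), 2 * Real.sin (ψ r) * deriv ψ r
      = 2 * ∫ ρ in (0:ℝ)..Real.pi, Real.sin ρ := by
    rw [← intervalIntegral.integral_const_mul]
    exact integral_Ioi_comp_mul_deriv_of_tendsto (continuous_const.mul Real.continuous_sin)
      hderiv (integrableOn_two_mul_sin_mul_deriv hmeas h2 h3) hlim0 hlimpi
  have hB : 0 ≤ ∫ r in Ioi (0:ℝ), (deriv ψ r - Real.sin (ψ r) / r) ^ 2 * r :=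
    setIntegral_nonneg measurableSet_Ioi fun r hr => mul_nonneg (sq_nonneg _) (le_of_lt hr)
  have hsin : 2 * ∫ ρ in (0:ℝ)..Real.pi, Real.sin ρ = 4 := by
    rw [integral_sin, Real.cos_zero, Real.cos_pi]; norm_num
  rw [energy_eq_integral_add_integral_add_integral hmeas h2 h3 h1, hcross]
  exact ⟨rfl, by linarith⟩
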